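/- arXiv:1603.07401 — 7 statements merged into one kernel-verified Lean document; each statement's English description precedes it below -/
import Mathlib

section
/- Let S be a finite nonempty family of closed intervals in ℝ, each with nonempty interior, and suppose the 'overlap graph' of S (two intervals adjacent iff their intersection has nonempty interior) is connected. Then the union of all intervals in S is itself a closed interval with nonempty interior. -/
/-! Overlapping intervals chain into a connected set; being also compact, the union is the closed
interval between its infimum and supremum, which is nondegenerate since it contains a member of `S`. -/

open Set Relation

theorem isConnected_biUnion_Icc_of_reflTransGen {α : Type*} [ConditionallyCompleteLinearOrder α]
    [DenselyOrdered α] [TopologicalSpace α] [OrderTopology α] {S : Set (α × α)}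
    (hne : S.Nonempty) (hle : ∀ p ∈ S, p.1 ≤ p.2)
    (hconn : ∀ p ∈ S, ∀ q ∈ S,
      ReflTransGen (fun x y : α × α => (Icc x.1 x.2 ∩ Icc y.1 y.2).Nonempty ∧ x ∈ S) p q) :
    IsConnected (⋃ p ∈ S, Icc p.1 p.2) :=
  IsConnected.biUnion_of_reflTransGen hne (fun p hp => isConnected_Icc (hle p hp)) hconn

/-- A finite nonempty family of closed intervals (each with nonempty interior)
whose overlap graph (adjacency: intersection has nonempty interior) is connected
has a union that is a closed interval with nonempty interior. -/
theorem union_of_connected_overlap_family (S : Finset (ℝ × ℝ)) (hne : S.Nonempty)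
    (hint : ∀ p ∈ S, p.1 < p.2)
    (hconn : ∀ p ∈ S, ∀ q ∈ S, Relation.ReflTransGen
      (fun x y : ℝ × ℝ => x ∈ S ∧ y ∈ S ∧
        (interior (Set.Icc x.1 x.2 ∩ Set.Icc y.1 y.2)).Nonempty) p q) :
    ∃ l u : ℝ, l < u ∧ (⋃ p ∈ S, Set.Icc p.1 p.2) = Set.Icc l u := by
  set U := ⋃ p ∈ S, Icc p.1 p.2
  have hU : IsConnected U :=
    isConnected_biUnion_Icc_of_reflTransGen (S := (S : Set (ℝ × ℝ))) (mod_cast hne)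
      (fun p hp => (hint p hp).le) fun p hp q hq =>
        ReflTransGen.mono (fun _ _ ⟨hx, _, hxy⟩ => ⟨hxy.mono interior_subset, hx⟩) _ _
          (hconn p hp q hq)
  have hUIcc : U = Icc (sInf U) (sSup U) :=
    eq_Icc_of_connected_compact hU (S.isCompact_biUnion fun _ _ => isCompact_Icc)
  obtain ⟨p, hp⟩ := hne
  have hpU : Icc p.1 p.2 ⊆ Icc (sInf U) (sSup U) :=
    hUIcc ▸ subset_biUnion_of_mem (u := fun p : ℝ × ℝ => Icc p.1 p.2) hp
  obtain ⟨hl, hu⟩ := (Icc_subset_Icc_iff (hint p hp).le).1 hpU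
  exact ⟨_, _, hl.trans_lt ((hint p hp).trans_le hu), hUIcc⟩
end

section
/- Let S be a finite family of closed intervals in ℝ, each with nonempty interior, and let ~ be the transitive closure of the overlap relation (I overlaps J iff I ∩ J has nonempty interior). Then the unions of distinct equivalence classes of ~ have intersections with empty interior; in fact, the open interiors of the unions of two distinct equivalence classes are disjoint. -/
/-!
A union of finitely many closed intervals differs from the union of their open interiors only in
finitely many endpoints. A point common to the interiors of two bars therefore has a neighbourhood
inside both, and this open set contains a non-endpoint `y`, which lies in the open interior of an
interval from each class. Those two intervals overlap, which relates `p` to `q`.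
-/

open Set

/-- The overlap relation on a finite family `S` of closed intervals:
two members overlap iff their intersection has nonempty interior. -/
def overlaps (S : Finset (ℝ × ℝ)) (x y : ℝ × ℝ) : Prop :=
  x ∈ S ∧ y ∈ S ∧ (interior (Set.Icc x.1 x.2 ∩ Set.Icc y.1 y.2)).Nonempty

lemma Set.Finite.biUnion_Icc_sdiff_biUnion_Ioo {s : Set (ℝ × ℝ)} (hs : s.Finite) :
    ((⋃ r ∈ s, Icc r.1 r.2) \ ⋃ r ∈ s, Ioo r.1 r.2).Finite := by
  refine (hs.biUnion fun r _ ↦ toFinite {r.1, r.2}).subset ?_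
  rintro y ⟨hy, hy'⟩
  simp only [mem_iUnion, exists_prop, not_exists, not_and] at hy hy' ⊢
  obtain ⟨r, hr, hyr⟩ := hy
  refine ⟨r, hr, ?_⟩
  rw [← Icc_sdiff_Ioo_same (hyr.1.trans hyr.2)]
  exact ⟨hyr, hy' r hr⟩

lemma exists_mem_Ioo_inter_Ioo_of_interior_biUnion_Icc {s t : Set (ℝ × ℝ)} (hs : s.Finite)
    (ht : t.Finite)
    (h : (interior (⋃ r ∈ s, Icc r.1 r.2) ∩ interior (⋃ r ∈ t, Icc r.1 r.2)).Nonempty) :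
    ∃ r ∈ s, ∃ r' ∈ t, (Ioo r.1 r.2 ∩ Ioo r'.1 r'.2).Nonempty := by
  have hdense := (hs.biUnion_Icc_sdiff_biUnion_Ioo.union
    ht.biUnion_Icc_sdiff_biUnion_Ioo).countable.dense_compl ℝ
  obtain ⟨y, hy, hys, hyt⟩ :=
    hdense.exists_mem_open (isOpen_interior.inter isOpen_interior) h
  rw [mem_compl_iff, mem_union, not_or] at hy
  obtain ⟨r, hr, hyr⟩ := mem_iUnion₂.1 (of_not_not fun h ↦ hy.1 ⟨interior_subset hys, h⟩)
  obtain ⟨r', hr', hyr'⟩ := mem_iUnion₂.1 (of_not_not fun h ↦ hy.2 ⟨interior_subset hyt, h⟩)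
  exact ⟨r, hr, r', hr', y, hyr, hyr'⟩

lemma overlaps_of_Ioo_inter_Ioo_nonempty {S : Finset (ℝ × ℝ)} {r r' : ℝ × ℝ} (hr : r ∈ S)
    (hr' : r' ∈ S) (h : (Ioo r.1 r.2 ∩ Ioo r'.1 r'.2).Nonempty) : overlaps S r r' := by
  refine ⟨hr, hr', ?_⟩
  rwa [interior_inter, interior_Icc, interior_Icc]

theorem bars_disjoint_general (S : Finset (ℝ × ℝ))
    (p q : ℝ × ℝ)
    (hnrel : ¬ Relation.EqvGen (overlaps S) p q) :
    Disjoint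
      (interior (⋃ r ∈ {r | r ∈ S ∧ Relation.EqvGen (overlaps S) p r}, Set.Icc r.1 r.2))
      (interior (⋃ r ∈ {r | r ∈ S ∧ Relation.EqvGen (overlaps S) q r}, Set.Icc r.1 r.2)) := by
  refine Set.disjoint_iff_inter_eq_empty.2 (Set.not_nonempty_iff_eq_empty.1 fun h ↦ hnrel ?_)
  have hfin (a : ℝ × ℝ) : {r | r ∈ S ∧ Relation.EqvGen (overlaps S) a r}.Finite :=
    S.finite_toSet.subset fun _ hr ↦ hr.1
  obtain ⟨r, ⟨hr, hpr⟩, r', ⟨hr', hqr'⟩, hrr'⟩ :=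
    exists_mem_Ioo_inter_Ioo_of_interior_biUnion_Icc (hfin p) (hfin q) h
  exact hpr.trans _ _ _ <|
    (Relation.EqvGen.rel _ _ (overlaps_of_Ioo_inter_Ioo_nonempty hr hr' hrr')).trans _ _ _ hqr'.symm

/-- Unions of distinct equivalence classes of the transitive closure of the
overlap relation have disjoint interiors (hence intersections with empty interior). -/
theorem bars_disjoint (S : Finset (ℝ × ℝ)) (hint : ∀ p ∈ S, p.1 < p.2)
    (p q : ℝ × ℝ) (hp : p ∈ S) (hq : q ∈ S)
    (hnrel : ¬ Relation.EqvGen (overlaps S) p q) :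
    Disjoint
      (interior (⋃ r ∈ {r | r ∈ S ∧ Relation.EqvGen (overlaps S) p r}, Set.Icc r.1 r.2))
      (interior (⋃ r ∈ {r | r ∈ S ∧ Relation.EqvGen (overlaps S) q r}, Set.Icc r.1 r.2)) :=
  bars_disjoint_general S p q hnrel
end

section
/- Let D be the closed unit disk in ℝ² and let q₁, q₂, q₃, q₄ be four distinct points in this cyclic order on the boundary circle ∂D. Then any two continuous paths γ₁ : [0,1] → D from q₁ to q₃ and γ₂ : [0,1] → D from q₂ to q₄ have intersecting images: there exist s, t ∈ [0,1] with γ₁(s) = γ₂(t). -/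
/-!
Suppose the paths do not meet. Then `g (s, t) = γ₁ s - γ₂ t` never vanishes on the square
`[0,1]²`, which is simply connected, so `g` has a continuous argument `α`. On each side of the
square one endpoint of `g` is a fixed boundary point `p` of the disk while the other ranges over
the disk minus `p`, so `g` stays in an open half-plane and `α` varies by less than `π` along that
side. At the corners `g` is a chord `e^{ia} - e^{ib}` of the circle, whose direction is
`(a + b)/2 - π/2` modulo `2π`. These two facts pin down the increment of `α` along each side
exactly, and for interleaved endpoints the four increments add up to `-2π` instead of `0`.
-/

open Real Set
open Complex (I)
open scoped Complex

instance unitInterval.contractibleSpace : ContractibleSpace unitInterval :=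
  (convex_Icc (0 : ℝ) 1).contractibleSpace (nonempty_Icc.2 zero_le_one)

instance unitInterval.locallyPathConnectedSpace : LocallyPathConnectedSpace unitInterval :=
  (convex_Icc (0 : ℝ) 1).locallyPathConnectedSpace

theorem ContinuousMap.exists_forall_exp_eq {A : Type*} [TopologicalSpace A] [SimplyConnectedSpace A]
    [LocallyPathConnectedSpace A] (f : C(A, ℂ)) (hf : ∀ a, f a ≠ 0) :
    ∃ F : C(A, ℂ), ∀ a, cexp (F a) = f a := by
  obtain ⟨a₀⟩ : Nonempty A := inferInstance
  obtain ⟨F, ⟨-, hF⟩, -⟩ :=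
    Complex.isCoveringMapOn_exp.existsUnique_continuousMap_lifts f (Complex.exp_log (hf a₀)) hf
  exact ⟨F, congrFun hF⟩

theorem Real.exists_cos_eq_zero_mem_Icc (u : ℝ) : ∃ w ∈ Icc u (u + π), cos w = 0 := by
  have hzero : (0 : ℝ) ∈ uIcc (cos u) (cos (u + π)) := by
    rw [cos_add_pi, mem_uIcc]
    rcases le_total 0 (cos u) with h | h
    · exact .inr ⟨by linarith, h⟩
    · exact .inl ⟨h, by linarith⟩
  obtain ⟨w, hw, hw0⟩ := intermediate_value_uIcc continuous_cos.continuousOn hzero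
  rw [uIcc_of_le (by linarith [pi_pos])] at hw
  exact ⟨w, hw, hw0⟩

theorem Complex.re_lt_one_of_norm_le_one {u : ℂ} (hu : ‖u‖ ≤ 1) (hne : u ≠ 1) : u.re < 1 := by
  by_contra! h
  have him : u.im ^ 2 ≤ 0 := by nlinarith [sq_norm_sub_sq_re u, norm_nonneg u]
  exact hne (Complex.ext (by rw [Complex.one_re]; nlinarith [re_le_norm u]) (by simpa using him))

theorem cos_im_sub_arg_neg_of_exp_eq_sub {p z w : ℂ} (hp : ‖p‖ = 1) (hz : ‖z‖ ≤ 1) (hne : z ≠ p)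
    (hw : cexp w = z - p) : cos (w.im - Complex.arg p) < 0 := by
  have hp0 : p ≠ 0 := norm_ne_zero_iff.1 (hp ▸ one_ne_zero)
  have hexp_arg : cexp (Complex.arg p * I) = p := by
    simpa [hp] using Complex.norm_mul_exp_arg_mul_I p
  have hrot : cexp (w - Complex.arg p * I) = z / p - 1 := by
    rw [Complex.exp_sub, hw, hexp_arg]
    field_simp
  have hre : (z / p).re < 1 := Complex.re_lt_one_of_norm_le_one
    (by rwa [norm_div, hp, div_one]) (fun h ↦ hne ((div_eq_one_iff_eq hp0).1 h))
  have hre' : Real.exp w.re * cos (w.im - Complex.arg p) = (z / p).re - 1 := by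
    simpa [Complex.exp_re] using congrArg Complex.re hrot
  exact neg_of_mul_neg_right (by linarith) (Real.exp_pos _).le

section PreconnectedSpace

variable {X : Type*} [TopologicalSpace X] [PreconnectedSpace X]

theorem sub_lt_pi_of_cos_sub_ne_zero {α : X → ℝ} (hα : Continuous α) {φ : ℝ}
    (hcos : ∀ x, cos (α x - φ) ≠ 0) (x y : X) : α y - α x < π := by
  by_contra! h
  obtain ⟨w, hw, hw0⟩ := exists_cos_eq_zero_mem_Icc (α x - φ)
  obtain ⟨z, hz⟩ := intermediate_value_univ x y hα
    (show w + φ ∈ Icc (α x) (α y) from ⟨by linarith [hw.1], by linarith [hw.2]⟩)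
  exact hcos z (by rw [hz, add_sub_cancel_right, hw0])

theorem abs_sub_lt_pi_of_cos_sub_ne_zero {α : X → ℝ} (hα : Continuous α) {φ : ℝ}
    (hcos : ∀ x, cos (α x - φ) ≠ 0) (x y : X) : |α x - α y| < π :=
  abs_sub_lt_iff.2
    ⟨sub_lt_pi_of_cos_sub_ne_zero hα hcos y x, sub_lt_pi_of_cos_sub_ne_zero hα hcos x y⟩

theorem abs_im_sub_lt_pi_of_exp_eq_sub {p : ℂ} (hp : ‖p‖ = 1) {c w : X → ℂ} (hw : Continuous w)
    (hc : ∀ x, ‖c x‖ ≤ 1) (hne : ∀ x, c x ≠ p) (hexp : ∀ x, cexp (w x) = c x - p) (x y : X) :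
    |(w x).im - (w y).im| < π :=
  abs_sub_lt_pi_of_cos_sub_ne_zero (Complex.continuous_im.comp hw)
    (fun x ↦ (cos_im_sub_arg_neg_of_exp_eq_sub hp (hc x) (hne x) (hexp x)).ne) x y

theorem abs_im_sub_lt_pi_of_exp_eq_sub_rev {p : ℂ} (hp : ‖p‖ = 1) {c w : X → ℂ}
    (hw : Continuous w) (hc : ∀ x, ‖c x‖ ≤ 1) (hne : ∀ x, c x ≠ p)
    (hexp : ∀ x, cexp (w x) = p - c x) (x y : X) : |(w x).im - (w y).im| < π := by
  have hexp' : ∀ x, cexp (w x + π * I) = c x - p := fun x ↦ by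
    rw [Complex.exp_add, Complex.exp_pi_mul_I, hexp]
    ring
  simpa using abs_im_sub_lt_pi_of_exp_eq_sub hp (by fun_prop) hc hne hexp' x y

end PreconnectedSpace

theorem Complex.exp_mul_I_sub_exp_mul_I (a b : ℝ) :
    cexp (a * I) - cexp (b * I) =
      ((2 * Real.sin ((b - a) / 2) : ℝ) : ℂ) * cexp (((a + b) / 2 - π / 2 : ℝ) * I) := by
  rw [show (b - a) / 2 = -((a - b) / 2) by ring, Real.sin_neg]
  apply Complex.ext
  · simp only [Complex.sub_re, Complex.mul_re, Complex.ofReal_re, Complex.ofReal_im,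
      Complex.exp_ofReal_mul_I_re, Complex.exp_ofReal_mul_I_im]
    rw [Real.cos_sub_pi_div_two, Real.cos_sub_cos]
    ring_nf
  · simp only [Complex.sub_im, Complex.mul_im, Complex.ofReal_re, Complex.ofReal_im,
      Complex.exp_ofReal_mul_I_re, Complex.exp_ofReal_mul_I_im]
    rw [Real.sin_sub_pi_div_two, Real.sin_sub_sin]
    ring_nf

theorem exists_int_im_eq_of_exp_eq_exp_mul_I_sub {a b : ℝ} (h₁ : a < b) (h₂ : b < a + 2 * π)
    {z : ℂ} (hz : cexp z = cexp (a * I) - cexp (b * I)) :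
    ∃ k : ℤ, z.im = (a + b) / 2 - π / 2 + k * (2 * π) := by
  have hsin : 0 < 2 * sin ((b - a) / 2) :=
    mul_pos two_pos (sin_pos_of_pos_of_lt_pi (by linarith) (by linarith))
  rw [Complex.exp_mul_I_sub_exp_mul_I, ← Real.exp_log hsin, Complex.ofReal_exp,
    ← Complex.exp_add] at hz
  obtain ⟨k, hk⟩ := Complex.exp_eq_exp_iff_exists_int.1 hz
  exact ⟨k, by simpa using congrArg Complex.im hk⟩

theorem eq_of_eq_add_int_mul_two_pi {x y : ℝ} (hx : |x| < π) (hy : |y| < π) {k : ℤ}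
    (h : x = y + k * (2 * π)) : x = y := by
  have hxy : |x - y| < 2 * π := (abs_sub _ _).trans_lt (by linarith)
  rw [h, add_sub_cancel_left, abs_mul, abs_of_pos two_pi_pos] at hxy
  have hk : k = 0 :=
    Int.abs_lt_one_iff.1 (by exact_mod_cast (mul_lt_iff_lt_one_left two_pi_pos).1 hxy)
  simpa [hk] using h

theorem interleaved_chord_angles_not_all_close {θ₀ θ₁ θ₂ θ₃ : ℝ} (h01 : θ₀ < θ₁) (h12 : θ₁ < θ₂)
    (h23 : θ₂ < θ₃) (h30 : θ₃ < θ₀ + 2 * π) {α₀₀ α₁₀ α₁₁ α₀₁ : ℝ}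
    (h₀₀ : ∃ k : ℤ, α₀₀ = (θ₀ + θ₁) / 2 - π / 2 + k * (2 * π))
    (h₁₀ : ∃ k : ℤ, α₁₀ = (θ₂ + (θ₁ + 2 * π)) / 2 - π / 2 + k * (2 * π))
    (h₁₁ : ∃ k : ℤ, α₁₁ = (θ₂ + θ₃) / 2 - π / 2 + k * (2 * π))
    (h₀₁ : ∃ k : ℤ, α₀₁ = (θ₀ + θ₃) / 2 - π / 2 + k * (2 * π)) :
    ¬(|α₁₀ - α₀₀| < π ∧ |α₁₁ - α₁₀| < π ∧ |α₁₁ - α₀₁| < π ∧ |α₀₁ - α₀₀| < π) := by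
  rintro ⟨bottom, right, top, left⟩
  obtain ⟨a, rfl⟩ := h₀₀
  obtain ⟨b, rfl⟩ := h₁₀
  obtain ⟨c, rfl⟩ := h₁₁
  obtain ⟨d, rfl⟩ := h₀₁
  have bottom := eq_of_eq_add_int_mul_two_pi (y := (θ₂ - θ₀) / 2 - π) bottom
    (abs_lt.2 ⟨by linarith, by linarith⟩) (k := b - a + 1) (by push_cast; ring)
  have right := eq_of_eq_add_int_mul_two_pi (y := (θ₃ - θ₁) / 2 - π) right
    (abs_lt.2 ⟨by linarith, by linarith⟩) (k := c - b) (by push_cast; ring)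
  have top := eq_of_eq_add_int_mul_two_pi (y := (θ₂ - θ₀) / 2) top
    (abs_lt.2 ⟨by linarith, by linarith⟩) (k := c - d) (by push_cast; ring)
  have left := eq_of_eq_add_int_mul_two_pi (y := (θ₃ - θ₁) / 2) left
    (abs_lt.2 ⟨by linarith, by linarith⟩) (k := d - a) (by push_cast; ring)
  linarith [pi_pos]

theorem exists_eq_of_interleaved_endpoints {θ₀ θ₁ θ₂ θ₃ : ℝ} (h01 : θ₀ < θ₁) (h12 : θ₁ < θ₂)
    (h23 : θ₂ < θ₃) (h30 : θ₃ < θ₀ + 2 * π) (c₁ c₂ : C(unitInterval, ℂ))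
    (hc₁ : ∀ s, ‖c₁ s‖ ≤ 1) (hc₂ : ∀ t, ‖c₂ t‖ ≤ 1)
    (h₁0 : c₁ 0 = cexp (θ₀ * I)) (h₁1 : c₁ 1 = cexp (θ₂ * I))
    (h₂0 : c₂ 0 = cexp (θ₁ * I)) (h₂1 : c₂ 1 = cexp (θ₃ * I)) :
    ∃ s t, c₁ s = c₂ t := by
  by_contra! hne
  obtain ⟨F, hF⟩ := ContinuousMap.exists_forall_exp_eq (c₁.comp .fst - c₂.comp .snd)
    (fun x ↦ sub_ne_zero.2 (hne x.1 x.2))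
  replace hF : ∀ s t, cexp (F (s, t)) = c₁ s - c₂ t := fun s t ↦ hF (s, t)
  have hnorm (θ : ℝ) : ‖cexp (θ * I)‖ = 1 := Complex.norm_exp_ofReal_mul_I θ
  -- the corner `(1, 0)` is the chord with `a = θ₂`, `b = θ₁ + 2π`, to have `a < b < a + 2π`
  have hperiodic : cexp (θ₁ * I) = cexp (↑(θ₁ + 2 * π) * I) := by
    simpa [add_mul, mul_assoc] using (Complex.exp_periodic (θ₁ * I)).symm
  refine interleaved_chord_angles_not_all_close h01 h12 h23 h30
    (exists_int_im_eq_of_exp_eq_exp_mul_I_sub h01 (by linarith) (by rw [hF, h₁0, h₂0]))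
    (exists_int_im_eq_of_exp_eq_exp_mul_I_sub (by linarith) (by linarith)
      (by rw [hF, h₁1, h₂0, hperiodic]))
    (exists_int_im_eq_of_exp_eq_exp_mul_I_sub h23 (by linarith) (by rw [hF, h₁1, h₂1]))
    (exists_int_im_eq_of_exp_eq_exp_mul_I_sub (by linarith) h30 (by rw [hF, h₁0, h₂1]))
    ⟨?_, ?_, ?_, ?_⟩
  · exact abs_im_sub_lt_pi_of_exp_eq_sub (h₂0 ▸ hnorm θ₁) (by fun_prop) hc₁ (fun s ↦ hne s 0)
      (fun s ↦ hF s 0) 1 0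
  · exact abs_im_sub_lt_pi_of_exp_eq_sub_rev (h₁1 ▸ hnorm θ₂) (by fun_prop) hc₂
      (fun t h ↦ hne 1 t h.symm) (hF 1) 1 0
  · exact abs_im_sub_lt_pi_of_exp_eq_sub (h₂1 ▸ hnorm θ₃) (by fun_prop) hc₁ (fun s ↦ hne s 1)
      (fun s ↦ hF s 1) 1 0
  · exact abs_im_sub_lt_pi_of_exp_eq_sub_rev (h₁0 ▸ hnorm θ₀) (by fun_prop) hc₂
      (fun t h ↦ hne 0 t h.symm) (hF 0) 1 0

theorem Complex.orthonormalBasisOneI_repr_symm_eq_exp {x : EuclideanSpace ℝ (Fin 2)} {θ : ℝ}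
    (hx : x 0 = Real.cos θ ∧ x 1 = Real.sin θ) :
    Complex.orthonormalBasisOneI.repr.symm x = cexp (θ * I) := by
  rw [Complex.orthonormalBasisOneI_repr_symm_apply, hx.1, hx.2, Complex.exp_mul_I]
  push_cast
  rfl

/-- Two continuous paths inside the closed unit disk connecting interleaved
boundary points must intersect. The four points `q 0, q 1, q 2, q 3` lie on the
boundary circle in this cyclic order (encoded by angles
`θ 0 < θ 1 < θ 2 < θ 3 < θ 0 + 2π`); `γ₁` runs from `q 0` to `q 2` and `γ₂`
from `q 1` to `q 3`, both staying in the disk. -/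
theorem paths_in_disk_interleaved_intersect
    (θ : Fin 4 → ℝ)
    (h01 : θ 0 < θ 1) (h12 : θ 1 < θ 2) (h23 : θ 2 < θ 3)
    (h30 : θ 3 < θ 0 + 2 * Real.pi)
    (q : Fin 4 → EuclideanSpace ℝ (Fin 2))
    (hq : ∀ i, q i 0 = Real.cos (θ i) ∧ q i 1 = Real.sin (θ i))
    (γ₁ γ₂ : ℝ → EuclideanSpace ℝ (Fin 2))
    (hc₁ : ContinuousOn γ₁ (Set.Icc 0 1)) (hc₂ : ContinuousOn γ₂ (Set.Icc 0 1))
    (hm₁ : Set.MapsTo γ₁ (Set.Icc 0 1) (Metric.closedBall 0 1))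
    (hm₂ : Set.MapsTo γ₂ (Set.Icc 0 1) (Metric.closedBall 0 1))
    (h₁0 : γ₁ 0 = q 0) (h₁1 : γ₁ 1 = q 2)
    (h₂0 : γ₂ 0 = q 1) (h₂1 : γ₂ 1 = q 3) :
    ∃ s ∈ Set.Icc (0:ℝ) 1, ∃ t ∈ Set.Icc (0:ℝ) 1, γ₁ s = γ₂ t := by
  let e := Complex.orthonormalBasisOneI.repr.symm
  let c₁ : C(unitInterval, ℂ) := ⟨fun s ↦ e (γ₁ s), e.continuous.comp hc₁.domRestrict⟩
  let c₂ : C(unitInterval, ℂ) := ⟨fun t ↦ e (γ₂ t), e.continuous.comp hc₂.domRestrict⟩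
  have he (i : Fin 4) : e (q i) = cexp (θ i * I) :=
    Complex.orthonormalBasisOneI_repr_symm_eq_exp (hq i)
  obtain ⟨s, t, hst⟩ := exists_eq_of_interleaved_endpoints h01 h12 h23 h30 c₁ c₂
    (fun s ↦ by simpa [c₁] using hm₁ s.2) (fun t ↦ by simpa [c₂] using hm₂ t.2)
    (by simp [c₁, h₁0, he]) (by simp [c₁, h₁1, he]) (by simp [c₂, h₂0, he]) (by simp [c₂, h₂1, he])
  exact ⟨s, s.2, t, t.2, e.injective hst⟩
end

section
/- Let a, b, c, d ∈ ℝ² be points such that the open segments (a, b) and (c, d) intersect in exactly one point x, and x is not an endpoint of either segment, and the segments are not collinear. Then there exists ε > 0 such that for all points a', b', c', d' with ‖a'−a‖ < ε, ‖b'−b‖ < ε, ‖c'−c‖ < ε, ‖d'−d‖ < ε, the closed segments [a', b'] and [c', d'] still intersect. -/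
/-! Write the crossing point as `a + s • (b - a) = c + t • (d - c)` with `s, t ∈ (0, 1)`.
Non-collinearity forces the cross product `(b - a) × (d - c)` to be nonzero, so by Cramer's rule
`s` and `t` are quotients of cross products of the endpoints, continuous near `(a, b, c, d)`.
Hence they stay in `[0, 1]` after a small perturbation, which is exactly a crossing of the
perturbed closed segments. -/

open AffineMap Filter Set Topology

local notation "ℝ²" => EuclideanSpace ℝ (Fin 2)

noncomputable def cross (u v : ℝ²) : ℝ := u 0 * v 1 - u 1 * v 0

lemma cross_swap (u v : ℝ²) : cross v u = -cross u v := by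
  unfold cross; ring

lemma continuous_cross : Continuous fun p : ℝ² × ℝ² => cross p.1 p.2 := by
  unfold cross; fun_prop

lemma tendsto_cross {α : Type*} {l : Filter α} {u v : α → ℝ²} {u₀ v₀ : ℝ²}
    (hu : Tendsto u l (𝓝 u₀)) (hv : Tendsto v l (𝓝 v₀)) :
    Tendsto (fun i => cross (u i) (v i)) l (𝓝 (cross u₀ v₀)) :=
  (continuous_cross.tendsto _).comp (hu.prodMk_nhds hv)

lemma exists_eq_smul_of_cross_eq_zero {u v : ℝ²} (hu : u ≠ 0) (h : cross u v = 0) :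
    ∃ k : ℝ, v = k • u := by
  unfold cross at h
  have hu' : u 0 ≠ 0 ∨ u 1 ≠ 0 := by
    by_contra! h0
    exact hu (by ext i; fin_cases i <;> simp [h0])
  rcases hu' with h0 | h1
  · refine ⟨v 0 / u 0, ?_⟩
    ext i; fin_cases i <;> simp only [Fin.zero_eta, Fin.mk_one, PiLp.smul_apply, smul_eq_mul] <;>
      field_simp
    linear_combination h
  · refine ⟨v 1 / u 1, ?_⟩
    ext i; fin_cases i <;> simp only [Fin.zero_eta, Fin.mk_one, PiLp.smul_apply, smul_eq_mul] <;>
      field_simp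
    linear_combination -h

/-- The parameter along the line `ab` of its intersection with the line `cd`;
a junk value when the lines are parallel (division by zero). -/
noncomputable def lineInterParam (a b c d : ℝ²) : ℝ :=
  cross (c - a) (d - c) / cross (b - a) (d - c)

lemma cross_smul_eq_add (u v w : ℝ²) : cross u v • w = cross w v • u + cross u w • v := by
  unfold cross
  ext i; fin_cases i <;>
    simp only [Fin.zero_eta, Fin.mk_one, PiLp.add_apply, PiLp.smul_apply, smul_eq_mul] <;> ring

lemma lineInterParam_swap (a b c d : ℝ²) :
    lineInterParam c d a b = cross (c - a) (b - a) / cross (b - a) (d - c) := by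
  have hnum : cross (a - c) (b - a) = -cross (c - a) (b - a) := by
    unfold cross; simp only [PiLp.sub_apply]; ring
  rw [lineInterParam, hnum, cross_swap (b - a) (d - c), neg_div_neg_eq]

variable {a b c d : ℝ²}

lemma lineMap_lineInterParam (hD : cross (b - a) (d - c) ≠ 0) :
    lineMap a b (lineInterParam a b c d) = lineMap c d (lineInterParam c d a b) := by
  rw [lineInterParam_swap a b c d, lineInterParam]
  have hcramer := cross_smul_eq_add (b - a) (d - c) (c - a)
  rw [cross_swap (c - a) (b - a)] at hcramer
  set D := cross (b - a) (d - c)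
  rw [lineMap_apply_module, lineMap_apply_module]
  apply smul_right_injective _ hD
  simp only [smul_add, smul_smul, mul_sub, mul_div_cancel₀ _ hD, mul_one]
  linear_combination (norm := module) -hcramer

lemma lineInterParam_eq_of_lineMap_eq {s t : ℝ} (hD : cross (b - a) (d - c) ≠ 0)
    (h : lineMap a b s = lineMap c d t) : lineInterParam a b c d = s := by
  have h0 := congrArg (· 0) h
  have h1 := congrArg (· 1) h
  simp only [lineMap_apply_module, PiLp.add_apply, PiLp.smul_apply, smul_eq_mul] at h0 h1
  rw [lineInterParam, div_eq_iff hD]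
  unfold cross
  simp only [PiLp.sub_apply]
  linear_combination (d 0 - c 0) * h1 - (d 1 - c 1) * h0

lemma collinear_of_cross_eq_zero {s t : ℝ} (h : lineMap a b s = lineMap c d t)
    (hD : cross (b - a) (d - c) = 0) : Collinear ℝ {a, b, c, d} := by
  by_cases hab : a = b
  · subst hab
    rw [Set.insert_idem]
    apply collinear_insert_of_mem_affineSpan_pair
    rw [lineMap_same_apply] at h
    exact h ▸ lineMap_mem_affineSpan_pair t c d
  obtain ⟨k, hk⟩ := exists_eq_smul_of_cross_eq_zero (sub_ne_zero.2 (Ne.symm hab)) hD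
  have hc : c = lineMap a b (s - t * k) := by
    rw [lineMap_apply_module, lineMap_apply_module] at *
    linear_combination (norm := module) -h - t • hk
  have hd : d = lineMap a b (s - t * k + k) := by
    rw [lineMap_apply_module] at *
    linear_combination (norm := module) hk + hc
  have hperm : ({a, b, c, d} : Set ℝ²) = {c, d, a, b} := by
    ext; simp only [mem_insert_iff, mem_singleton_iff]; tauto
  rw [hperm, hc, hd]
  exact collinear_insert_insert_of_mem_affineSpan_pair
    (lineMap_mem_affineSpan_pair _ _ _) (lineMap_mem_affineSpan_pair _ _ _)

variable {α : Type*} {l : Filter α} {a' b' c' d' : α → ℝ²}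

lemma tendsto_lineInterParam (ha : Tendsto a' l (𝓝 a)) (hb : Tendsto b' l (𝓝 b))
    (hc : Tendsto c' l (𝓝 c)) (hd : Tendsto d' l (𝓝 d)) (hD : cross (b - a) (d - c) ≠ 0) :
    Tendsto (fun i => lineInterParam (a' i) (b' i) (c' i) (d' i)) l
      (𝓝 (lineInterParam a b c d)) :=
  (tendsto_cross (hc.sub ha) (hd.sub hc)).div (tendsto_cross (hb.sub ha) (hd.sub hc)) hD

theorem eventually_segment_inter_nonempty_of_tendsto {s t : ℝ}
    (hs : s ∈ Ioo 0 1) (ht : t ∈ Ioo 0 1) (h : lineMap a b s = lineMap c d t)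
    (hD : cross (b - a) (d - c) ≠ 0) (ha : Tendsto a' l (𝓝 a)) (hb : Tendsto b' l (𝓝 b))
    (hc : Tendsto c' l (𝓝 c)) (hd : Tendsto d' l (𝓝 d)) :
    ∀ᶠ i in l, (segment ℝ (a' i) (b' i) ∩ segment ℝ (c' i) (d' i)).Nonempty := by
  have hDsymm : cross (d - c) (b - a) ≠ 0 := by rw [cross_swap]; exact neg_ne_zero.2 hD
  have hs' := tendsto_lineInterParam ha hb hc hd hD
  have ht' := tendsto_lineInterParam hc hd ha hb hDsymm
  rw [lineInterParam_eq_of_lineMap_eq hD h] at hs'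
  rw [lineInterParam_eq_of_lineMap_eq hDsymm h.symm] at ht'
  filter_upwards [(tendsto_cross (hb.sub ha) (hd.sub hc)).eventually_ne hD,
    hs'.eventually (Icc_mem_nhds hs.1 hs.2), ht'.eventually (Icc_mem_nhds ht.1 ht.2)]
    with i hDi hsi hti
  rw [segment_eq_image_lineMap, segment_eq_image_lineMap]
  exact ⟨_, ⟨_, hsi, rfl⟩, ⟨_, hti, (lineMap_lineInterParam hDi).symm⟩⟩

theorem crossing_stable_under_perturbation_general
    (a b c d x : EuclideanSpace ℝ (Fin 2))
    (hx : openSegment ℝ a b ∩ openSegment ℝ c d = {x})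
    (hcol : ¬ Collinear ℝ ({a, b, c, d} : Set (EuclideanSpace ℝ (Fin 2)))) :
    ∃ ε > 0, ∀ a' b' c' d' : EuclideanSpace ℝ (Fin 2),
      ‖a' - a‖ < ε → ‖b' - b‖ < ε → ‖c' - c‖ < ε → ‖d' - d‖ < ε →
      (segment ℝ a' b' ∩ segment ℝ c' d').Nonempty := by
  have hxmem : x ∈ openSegment ℝ a b ∩ openSegment ℝ c d := hx ▸ rfl
  rw [openSegment_eq_image_lineMap, openSegment_eq_image_lineMap] at hxmem
  obtain ⟨⟨s, hs, rfl⟩, t, ht, hst⟩ := hxmem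
  have hD : cross (b - a) (d - c) ≠ 0 := mt (collinear_of_cross_eq_zero hst.symm) hcol
  have hnear : ∀ᶠ p : ℝ² × ℝ² × ℝ² × ℝ² in 𝓝 (a, b, c, d),
      (segment ℝ p.1 p.2.1 ∩ segment ℝ p.2.2.1 p.2.2.2).Nonempty :=
    eventually_segment_inter_nonempty_of_tendsto hs ht hst.symm hD tendsto_id.fst_nhds
      tendsto_id.snd_nhds.fst_nhds tendsto_id.snd_nhds.snd_nhds.fst_nhds
      tendsto_id.snd_nhds.snd_nhds.snd_nhds
  obtain ⟨ε, hε, hball⟩ := Metric.eventually_nhds_iff.1 hnear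
  refine ⟨ε, hε, fun a' b' c' d' ha hb hc hd => hball (y := (a', b', c', d')) ?_⟩
  simp only [Prod.dist_eq, max_lt_iff, dist_eq_norm (E := ℝ²)]
  exact ⟨ha, hb, hc, hd⟩

/-- Stability of a proper transversal segment crossing under small perturbations
of the endpoints: if the open segments `(a,b)` and `(c,d)` meet in exactly one
point `x`, which is not an endpoint of either segment, and the four points are
not collinear, then for sufficiently small perturbations of `a, b, c, d` the
closed segments still intersect. -/
theorem crossing_stable_under_perturbation
    (a b c d x : EuclideanSpace ℝ (Fin 2))
    (hx : openSegment ℝ a b ∩ openSegment ℝ c d = {x})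
    (hxa : x ≠ a) (hxb : x ≠ b) (hxc : x ≠ c) (hxd : x ≠ d)
    (hcol : ¬ Collinear ℝ ({a, b, c, d} : Set (EuclideanSpace ℝ (Fin 2)))) :
    ∃ ε > 0, ∀ a' b' c' d' : EuclideanSpace ℝ (Fin 2),
      ‖a' - a‖ < ε → ‖b' - b‖ < ε → ‖c' - c‖ < ε → ‖d' - d‖ < ε →
      (segment ℝ a' b' ∩ segment ℝ c' d').Nonempty :=
  crossing_stable_under_perturbation_general a b c d x hx hcol
end

section
/- Let P = (p₀, …, p_{n−1}) be a polygon (n ≥ 3) and suppose there exist indices i, j whose edges e_i = [p_i, p_{i+1}] and e_j = [p_j, p_{j+1}] (indices mod n) are nonadjacent (share no index) and cross transversally: their interiors meet in exactly one point which is not an endpoint of either, and they are not collinear. Then P is not weakly simple; i.e., there exists ε > 0 such that no simple polygon (p'₀, …, p'_{n−1}) satisfies ‖p'_k − p_k‖ < ε for all k. -/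
/-!
Two plane segments `[a, b]` and `[c, d]` meet as soon as each one has its endpoints strictly on
opposite sides of the line through the other, i.e. the signed areas `ω (b - a) (c - a)` and
`ω (b - a) (d - a)` have opposite signs, and likewise with the roles exchanged. At a transversal
crossing these strict sign conditions hold (a vanishing area would make all four endpoints
collinear), and as strict inequalities between continuous functions of the endpoints they survive
every small perturbation of the vertices, so nonadjacent edges of any nearby polygon still meet.
-/

/-- A closed polygonal curve with `n` vertices `q 0, …, q (n-1)` (indices mod `n`)
is simple: vertices are distinct, nonadjacent edges are disjoint, and adjacent
edges meet only at their shared vertex. -/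
def IsSimplePolygon (n : ℕ) (q : ℕ → EuclideanSpace ℝ (Fin 2)) : Prop :=
  (∀ i < n, ∀ j < n, q i = q j → i = j) ∧
  (∀ i < n, ∀ j < n, i ≠ j → (i + 1) % n ≠ j → (j + 1) % n ≠ i →
    segment ℝ (q i) (q ((i + 1) % n)) ∩ segment ℝ (q j) (q ((j + 1) % n)) = ∅) ∧
  (∀ i < n, segment ℝ (q i) (q ((i + 1) % n)) ∩
      segment ℝ (q ((i + 1) % n)) (q ((i + 2) % n)) = {q ((i + 1) % n)})

open Module Set Topology AffineMap

theorem mem_Ioo_of_mul_neg_of_lineMap_eq_zero {α β t : ℝ} (h : α * β < 0)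
    (ht : lineMap α β t = 0) : t ∈ Ioo 0 1 := by
  rw [lineMap_apply_ring] at ht
  have hα : (1 - t) * (α * α) + t * (α * β) = 0 := by linear_combination α * ht
  have hβ : (1 - t) * (α * β) + t * (β * β) = 0 := by linear_combination β * ht
  have hα0 : α ≠ 0 := by rintro rfl; simp at h
  have hβ0 : β ≠ 0 := by rintro rfl; simp at h
  constructor
  · nlinarith [mul_self_pos.2 hα0]
  · nlinarith [mul_self_pos.2 hβ0]

theorem mul_neg_of_lineMap_eq_zero {α β t : ℝ} (ht : t ∈ Ioo 0 1) (hα : α ≠ 0)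
    (h : lineMap α β t = 0) : α * β < 0 := by
  rw [lineMap_apply_ring] at h
  have : t * (α * β) < 0 := by
    nlinarith [mul_self_pos.2 hα, ht.2, show (1 - t) * (α * α) + t * (α * β) = 0 by
      linear_combination α * h]
  exact neg_of_mul_neg_right this ht.1.le

theorem exists_lineMap_eq_zero_of_mul_neg {α β : ℝ} (h : α * β < 0) :
    ∃ t ∈ Ioo (0 : ℝ) 1, lineMap α β t = 0 := by
  have hαβ : α - β ≠ 0 := by
    intro e
    rw [sub_eq_zero.1 e] at h
    nlinarith [mul_self_nonneg β]
  have ht : lineMap α β (α / (α - β)) = 0 := by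
    rw [lineMap_apply_ring]; field_simp; ring
  exact ⟨_, mem_Ioo_of_mul_neg_of_lineMap_eq_zero h ht, ht⟩

section Segment

variable {E : Type*} [AddCommGroup E] [Module ℝ E]

theorem mem_affineSpan_pair_of_mem_openSegment {a b x : E} (h : x ∈ openSegment ℝ a b) :
    x ∈ line[ℝ, a, b] :=
  (mem_segment_iff_wbtw.1 (openSegment_subset_segment ℝ a b h)).mem_affineSpan

theorem ne_of_mem_openSegment_of_not_collinear {a b c d x : E} (hab : x ∈ openSegment ℝ a b)
    (hcd : x ∈ openSegment ℝ c d) (hcol : ¬Collinear ℝ {a, b, c, d}) : c ≠ d := by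
  rintro rfl
  rw [openSegment_same, mem_singleton_iff] at hcd
  subst hcd
  have := collinear_insert_of_mem_affineSpan_pair (mem_affineSpan_pair_of_mem_openSegment hab)
  rw [insert_comm, pair_comm] at this
  rw [insert_eq_of_mem (mem_singleton x)] at hcol
  exact hcol this

end Segment

namespace Orientation

variable {E : Type*} [NormedAddCommGroup E] [InnerProductSpace ℝ E] [Fact (finrank ℝ E = 2)]
  (o : Orientation ℝ E (Fin 2))

local notation "ω" => o.areaForm

theorem exists_smul_eq_of_areaForm_eq_zero {u v : E} (hu : u ≠ 0) (h : ω u v = 0) :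
    ∃ r : ℝ, r • u = v := by
  rcases le_total 0 (inner ℝ u v) with hv | hv
  · obtain ⟨r, -, hr⟩ :=
      ((o.nonneg_inner_and_areaForm_eq_zero_iff_sameRay u v).1 ⟨hv, h⟩).exists_nonneg_left hu
    exact ⟨r, hr⟩
  · have : SameRay ℝ u (-v) := (o.nonneg_inner_and_areaForm_eq_zero_iff_sameRay u (-v)).1
      ⟨by simpa [inner_neg_right] using hv, by simp [h]⟩
    obtain ⟨r, -, hr⟩ := this.exists_nonneg_left hu
    exact ⟨-r, by rw [neg_smul, hr, neg_neg]⟩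

theorem mem_affineSpan_pair_iff_areaForm_eq_zero {c d p : E} (hcd : c ≠ d) :
    p ∈ line[ℝ, c, d] ↔ ω (d - c) (p - c) = 0 := by
  rw [← vsub_vadd p c, vadd_left_mem_affineSpan_pair, vsub_vadd, vsub_eq_sub, vsub_eq_sub]
  constructor
  · rintro ⟨r, hr⟩
    rw [← hr, map_smul, areaForm_apply_self, smul_zero]
  · exact o.exists_smul_eq_of_areaForm_eq_zero (sub_ne_zero.2 hcd.symm)

theorem areaForm_lineMap_sub (w p q c : E) (t : ℝ) :
    ω w (lineMap p q t - c) = lineMap (ω w (p - c)) (ω w (q - c)) t := by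
  simp only [lineMap_apply_module, map_sub, map_add, map_smul, smul_eq_mul]
  ring

theorem areaForm_mul_areaForm_neg_of_mem_openSegment {a b c d x : E} (hcd : c ≠ d)
    (hab : x ∈ openSegment ℝ a b) (hx : x ∈ line[ℝ, c, d])
    (hcol : ¬Collinear ℝ {a, b, c, d}) :
    ω (d - c) (a - c) * ω (d - c) (b - c) < 0 := by
  obtain ⟨t, ht, rfl⟩ := (openSegment_eq_image_lineMap ℝ a b).subset hab
  have h0 := (o.mem_affineSpan_pair_iff_areaForm_eq_zero hcd).1 hx
  rw [areaForm_lineMap_sub] at h0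
  by_cases ha : ω (d - c) (a - c) = 0
  · have hb : ω (d - c) (b - c) = 0 := by
      rw [ha, lineMap_apply_ring] at h0
      simpa [ht.1.ne'] using h0
    exact absurd (collinear_insert_insert_of_mem_affineSpan_pair
      ((o.mem_affineSpan_pair_iff_areaForm_eq_zero hcd).2 ha)
      ((o.mem_affineSpan_pair_iff_areaForm_eq_zero hcd).2 hb)) hcol
  · exact mul_neg_of_lineMap_eq_zero ht ha h0

theorem segment_inter_nonempty_of_areaForm_mul_neg {a b c d : E}
    (hab : ω (b - a) (c - a) * ω (b - a) (d - a) < 0)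
    (hcd : ω (d - c) (a - c) * ω (d - c) (b - c) < 0) :
    (segment ℝ a b ∩ segment ℝ c d).Nonempty := by
  have hab' : a ≠ b := by rintro rfl; simp at hab
  have hcd' : c ≠ d := by rintro rfl; simp at hcd
  obtain ⟨t, ht, hy⟩ := exists_lineMap_eq_zero_of_mul_neg hcd
  rw [← areaForm_lineMap_sub, ← o.mem_affineSpan_pair_iff_areaForm_eq_zero hcd'] at hy
  obtain ⟨r, hr⟩ := mem_affineSpan_pair_iff_exists_lineMap_eq.1 hy
  have hr0 : lineMap (ω (b - a) (c - a)) (ω (b - a) (d - a)) r = 0 := by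
    rw [← areaForm_lineMap_sub, hr, ← o.mem_affineSpan_pair_iff_areaForm_eq_zero hab']
    exact lineMap_mem_affineSpan_pair t a b
  refine ⟨lineMap a b t, ?_, ?_⟩
  · exact (segment_eq_image_lineMap ℝ a b).superset ⟨t, Ioo_subset_Icc_self ht, rfl⟩
  · refine (segment_eq_image_lineMap ℝ c d).superset ⟨r, Ioo_subset_Icc_self ?_, hr⟩
    exact mem_Ioo_of_mul_neg_of_lineMap_eq_zero hab hr0

end Orientation

theorem eventually_segment_inter_segment_nonempty {E : Type*} [NormedAddCommGroup E]
    [InnerProductSpace ℝ E] [Fact (finrank ℝ E = 2)] {a b c d x : E}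
    (hab : x ∈ openSegment ℝ a b) (hcd : x ∈ openSegment ℝ c d)
    (hcol : ¬Collinear ℝ {a, b, c, d}) :
    ∀ᶠ z : (E × E) × E × E in 𝓝 ((a, b), (c, d)),
      (segment ℝ z.1.1 z.1.2 ∩ segment ℝ z.2.1 z.2.2).Nonempty := by
  have : FiniteDimensional ℝ E := .of_fact_finrank_eq_two
  let o : Orientation ℝ E (Fin 2) := (finBasisOfFinrankEq ℝ E Fact.out).orientation
  have hcol' : ¬Collinear ℝ {c, d, a, b} := by
    have : ({c, d, a, b} : Set E) = {a, b, c, d} := by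
      ext; simp only [mem_insert_iff, mem_singleton_iff]; tauto
    rwa [this]
  have hω : Continuous fun p : E × E => o.areaForm p.1 p.2 := by
    simpa [Function.uncurry_def] using o.areaForm'.continuous₂
  have h₁ : ∀ᶠ z : (E × E) × E × E in 𝓝 ((a, b), (c, d)),
      o.areaForm (z.1.2 - z.1.1) (z.2.1 - z.1.1) * o.areaForm (z.1.2 - z.1.1) (z.2.2 - z.1.1) < 0 :=
    ContinuousAt.eventually_lt (by fun_prop) continuousAt_const <|
      o.areaForm_mul_areaForm_neg_of_mem_openSegment
        (ne_of_mem_openSegment_of_not_collinear hcd hab hcol') hcd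
        (mem_affineSpan_pair_of_mem_openSegment hab) hcol'
  have h₂ : ∀ᶠ z : (E × E) × E × E in 𝓝 ((a, b), (c, d)),
      o.areaForm (z.2.2 - z.2.1) (z.1.1 - z.2.1) * o.areaForm (z.2.2 - z.2.1) (z.1.2 - z.2.1) < 0 :=
    ContinuousAt.eventually_lt (by fun_prop) continuousAt_const <|
      o.areaForm_mul_areaForm_neg_of_mem_openSegment
        (ne_of_mem_openSegment_of_not_collinear hab hcd hcol) hab
        (mem_affineSpan_pair_of_mem_openSegment hcd) hcol
  filter_upwards [h₁, h₂] with z using o.segment_inter_nonempty_of_areaForm_mul_neg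

theorem not_weakly_simple_of_transversal_crossing_general
    (n : ℕ) (p : ℕ → EuclideanSpace ℝ (Fin 2))
    (i j : ℕ) (hi : i < n) (hj : j < n)
    (hij : i ≠ j) (hij1 : i ≠ (j + 1) % n) (hji1 : j ≠ (i + 1) % n)
    (x : EuclideanSpace ℝ (Fin 2))
    (hx : openSegment ℝ (p i) (p ((i + 1) % n)) ∩
          openSegment ℝ (p j) (p ((j + 1) % n)) = {x})
    (hcol : ¬ Collinear ℝ ({p i, p ((i + 1) % n), p j, p ((j + 1) % n)} :
      Set (EuclideanSpace ℝ (Fin 2)))) :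
    ∃ ε > 0, ∀ q : ℕ → EuclideanSpace ℝ (Fin 2),
      (∀ k < n, ‖q k - p k‖ < ε) → ¬ IsSimplePolygon n q := by
  have : Fact (finrank ℝ (EuclideanSpace ℝ (Fin 2)) = 2) := ⟨finrank_euclideanSpace_fin⟩
  have hx' : x ∈ _ ∩ _ := hx ▸ mem_singleton x
  obtain ⟨ε, hε, hcross⟩ := Metric.eventually_nhds_iff.1 <|
    eventually_segment_inter_segment_nonempty hx'.1 hx'.2 hcol
  refine ⟨ε, hε, fun q hq hsimple => ?_⟩
  have hi1 : (i + 1) % n < n := Nat.mod_lt _ (by omega)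
  have hj1 : (j + 1) % n < n := Nat.mod_lt _ (by omega)
  obtain ⟨y, hy⟩ := hcross (y := ((q i, q ((i + 1) % n)), (q j, q ((j + 1) % n)))) <| by
    rw [Prod.dist_eq, Prod.dist_eq, Prod.dist_eq]
    simp only [dist_eq_norm]
    exact max_lt (max_lt (hq i hi) (hq _ hi1)) (max_lt (hq j hj) (hq _ hj1))
  have hdisjoint := hsimple.2.1 i hi j hj hij (Ne.symm hji1) (Ne.symm hij1)
  exact notMem_empty y (hdisjoint ▸ hy)

/-- A polygon with a transversal edge crossing between two nonadjacent edges is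
not weakly simple: some `ε > 0` admits no simple polygon within vertexwise
distance `ε`. -/
theorem not_weakly_simple_of_transversal_crossing
    (n : ℕ) (hn : 3 ≤ n) (p : ℕ → EuclideanSpace ℝ (Fin 2))
    (i j : ℕ) (hi : i < n) (hj : j < n)
    (hij : i ≠ j) (hij1 : i ≠ (j + 1) % n) (hji1 : j ≠ (i + 1) % n)
    (x : EuclideanSpace ℝ (Fin 2))
    (hx : openSegment ℝ (p i) (p ((i + 1) % n)) ∩
          openSegment ℝ (p j) (p ((j + 1) % n)) = {x})
    (hxe : x ∉ ({p i, p ((i + 1) % n), p j, p ((j + 1) % n)} :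
      Set (EuclideanSpace ℝ (Fin 2))))
    (hcol : ¬ Collinear ℝ ({p i, p ((i + 1) % n), p j, p ((j + 1) % n)} :
      Set (EuclideanSpace ℝ (Fin 2)))) :
    ∃ ε > 0, ∀ q : ℕ → EuclideanSpace ℝ (Fin 2),
      (∀ k < n, ‖q k - p k‖ < ε) → ¬ IsSimplePolygon n q :=
  not_weakly_simple_of_transversal_crossing_general n p i j hi hj hij hij1 hji1 x hx hcol
end

section
/- Let p, q ∈ ℝ² be distinct points and k ≥ 2. The polygon with 2k vertices alternating between p and q, namely (p, q, p, q, …, p, q), is weakly simple: for every ε > 0 there exists a simple polygon (p'₀, …, p'_{2k−1}) with ‖p'_{2i} − p‖ < ε and ‖p'_{2i+1} − q‖ < ε for all i. -/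
/-!
Keep one odd vertex at `q` and put the others on rays from `q` in directions
`r • (p - q + s • w)`, with slopes `s` strictly increasing and radii `r` equal to `1` at even
and tiny at odd indices. Such a fan, whose vertices after the apex turn strictly
counterclockwise within a half-turn, is simple: for an alternating form `ω`, the linear form
`ω (d a)` is negative on the rays before `d a`, zero on it and positive after it, so the line
through the apex along a suitable ray separates any two nonadjacent edges and meets two adjacent
edges only in their common vertex.
-/

section Segment

variable {E : Type*} [AddCommGroup E] [Module ℝ E]

theorem segment_inter_segment_eq_empty_of_le_of_lt (f : E →ₗ[ℝ] ℝ) {t : ℝ} {x y x' y' : E}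
    (hx : f x ≤ t) (hy : f y ≤ t) (hx' : t < f x') (hy' : t < f y') :
    segment ℝ x y ∩ segment ℝ x' y' = ∅ :=
  Set.eq_empty_of_forall_notMem fun z ⟨h, h'⟩ => by
    have hz : f z ≤ t := (convex_halfSpace_le f.isLinear t).segment_subset hx hy h
    have hz' : t < f z := (convex_halfSpace_gt f.isLinear t).segment_subset hx' hy' h'
    exact hz.not_gt hz'

theorem eq_right_of_mem_segment_of_map_eq (f : E →ₗ[ℝ] ℝ) {x y z : E} (hxy : f x ≠ f y)
    (hz : z ∈ segment ℝ x y) (hfz : f z = f y) : z = y := by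
  obtain ⟨a, b, -, -, hab, rfl⟩ := hz
  obtain rfl : b = 1 - a := by linarith
  have ha : a * (f x - f y) = 0 := by
    simp only [map_add, map_smul, smul_eq_mul] at hfz
    linear_combination hfz
  obtain rfl : a = 0 := (mul_eq_zero.mp ha).resolve_right (sub_ne_zero.mpr hxy)
  simp

theorem segment_inter_segment_eq_singleton (f : E →ₗ[ℝ] ℝ) {x y z : E}
    (hxy : f x ≤ f y) (hyz : f y ≤ f z) (h : f x < f y ∨ f y < f z) :
    segment ℝ x y ∩ segment ℝ y z = {y} := by
  refine Set.Subset.antisymm ?_ (by simp [left_mem_segment, right_mem_segment])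
  rintro v ⟨hv, hv'⟩
  have hle : f v ≤ f y :=
    (convex_halfSpace_le f.isLinear (f y)).segment_subset hxy (le_refl (f y)) hv
  have hge : f y ≤ f v :=
    (convex_halfSpace_ge f.isLinear (f y)).segment_subset (le_refl (f y)) hyz hv'
  have hfv : f v = f y := le_antisymm hle hge
  rcases h with h | h
  · exact eq_right_of_mem_segment_of_map_eq f h.ne hv hfv
  · exact eq_right_of_mem_segment_of_map_eq f h.ne' (segment_symm ℝ y z ▸ hv') hfv

end Segment

def fanPolygon {E : Type*} [AddCommGroup E] (n : ℕ) (c : E) (d : ℕ → E) : ℕ → E :=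
  fun m => if m = n - 1 then c else c + d m

namespace fanPolygon

variable {E : Type*} [AddCommGroup E] {n : ℕ} {c : E} {d : ℕ → E}

theorem apply_apex : fanPolygon n c d (n - 1) = c := if_pos rfl

theorem apply_of_ne {m : ℕ} (hm : m ≠ n - 1) : fanPolygon n c d m = c + d m := if_neg hm

theorem map_apply_of_ne [Module ℝ E] (f : E →ₗ[ℝ] ℝ) {m : ℕ} (hm : m ≠ n - 1) :
    f (fanPolygon n c d m) = f c + f (d m) := by
  rw [apply_of_ne hm, map_add]

variable [Module ℝ E] {ω : E →ₗ[ℝ] E →ₗ[ℝ] ℝ}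
  (hω : ω.IsAlt) (hd : ∀ i j, i < j → j < n - 1 → 0 < ω (d i) (d j))
include hω hd

theorem apply_lt_zero {i j : ℕ} (hij : i < j) (hj : j < n - 1) : ω (d j) (d i) < 0 := by
  rw [← hω.neg]
  exact neg_neg_of_pos (hd i j hij hj)

theorem apply_ne_zero {i j : ℕ} (hij : i ≠ j) (hi : i < n - 1) (hj : j < n - 1) :
    ω (d i) (d j) ≠ 0 := by
  rcases hij.lt_or_gt with h | h
  · exact (hd i j h hj).ne'
  · exact (apply_lt_zero hω hd h hi).ne

theorem direction_ne_zero (hn : 3 ≤ n) {m : ℕ} (hm : m < n - 1) : d m ≠ 0 := by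
  intro h0
  have hne : (if m = 0 then 1 else 0) ≠ m := by split_ifs <;> omega
  apply apply_ne_zero hω hd hne.symm hm (by split_ifs <;> omega)
  rw [h0, map_zero, LinearMap.zero_apply]

theorem injOn_Iio (hn : 3 ≤ n) : Set.InjOn (fanPolygon n c d) (Set.Iio n) := by
  rintro i (hi : i < n) j (hj : j < n) h
  by_contra hij
  rcases eq_or_ne i (n - 1) with rfl | hi'
  · rw [apply_apex, apply_of_ne (by omega), left_eq_add] at h
    exact direction_ne_zero hω hd hn (by omega) h
  rcases eq_or_ne j (n - 1) with rfl | hj'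
  · rw [apply_apex, apply_of_ne hi', add_eq_left] at h
    exact direction_ne_zero hω hd hn (by omega) h
  rw [apply_of_ne hi', apply_of_ne hj'] at h
  have h' := congrArg (ω (d i)) h
  rw [map_add, map_add, hω.self_eq_zero, add_zero, left_eq_add] at h'
  exact apply_ne_zero hω hd hij (by omega) (by omega) h'

theorem segment_inter_segment_eq_empty {i j : ℕ} (hij : i + 1 < j) (hj : j < n)
    (hji : (j + 1) % n ≠ i) :
    segment ℝ (fanPolygon n c d i) (fanPolygon n c d (i + 1)) ∩
      segment ℝ (fanPolygon n c d j) (fanPolygon n c d ((j + 1) % n)) = ∅ := by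
  rcases (by omega : j = n - 1 ∨ j = n - 2 ∨ j + 2 < n) with rfl | rfl | hj'
  · rw [show n - 1 + 1 = n by omega, Nat.mod_self] at hji ⊢
    rw [Set.inter_comm, apply_apex]
    refine segment_inter_segment_eq_empty_of_le_of_lt (ω (d 0)) le_rfl ?_ ?_ ?_
    · rw [map_apply_of_ne _ (by omega), hω.self_eq_zero, add_zero]
    all_goals rw [map_apply_of_ne _ (by omega)]
    · exact lt_add_of_pos_right _ (hd 0 i (by omega) (by omega))
    · exact lt_add_of_pos_right _ (hd 0 (i + 1) (by omega) (by omega))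
  · rw [show n - 2 + 1 = n - 1 by omega, Nat.mod_eq_of_lt (by omega), Set.inter_comm, apply_apex]
    refine segment_inter_segment_eq_empty_of_le_of_lt (ω.flip (d (n - 2))) ?_ le_rfl ?_ ?_
    all_goals rw [map_apply_of_ne _ (by omega)]; simp only [LinearMap.flip_apply]
    · rw [hω.self_eq_zero, add_zero]
    · exact lt_add_of_pos_right _ (hd i (n - 2) (by omega) (by omega))
    · exact lt_add_of_pos_right _ (hd (i + 1) (n - 2) (by omega) (by omega))
  · rw [Nat.mod_eq_of_lt (by omega)]
    refine segment_inter_segment_eq_empty_of_le_of_lt (ω (d (i + 1))) (t := ω (d (i + 1)) c)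
      ?_ ?_ ?_ ?_ <;> rw [map_apply_of_ne _ (by omega)]
    · exact add_le_of_nonpos_right (apply_lt_zero hω hd (by omega) (by omega)).le
    · rw [hω.self_eq_zero, add_zero]
    · exact lt_add_of_pos_right _ (hd (i + 1) j (by omega) (by omega))
    · exact lt_add_of_pos_right _ (hd (i + 1) (j + 1) (by omega) (by omega))

theorem segment_inter_segment_eq_singleton (hn : 3 ≤ n) {i : ℕ} (hi : i < n) :
    segment ℝ (fanPolygon n c d i) (fanPolygon n c d ((i + 1) % n)) ∩
        segment ℝ (fanPolygon n c d ((i + 1) % n)) (fanPolygon n c d ((i + 2) % n)) =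
      {fanPolygon n c d ((i + 1) % n)} := by
  rcases (by omega : i + 3 < n ∨ i = n - 3 ∨ i = n - 2 ∨ i = n - 1) with hi' | rfl | rfl | rfl
  · rw [Nat.mod_eq_of_lt (by omega), Nat.mod_eq_of_lt (by omega)]
    refine _root_.segment_inter_segment_eq_singleton (ω (d (i + 1))) ?_ ?_ (.inl ?_) <;>
      simp (disch := omega) only [map_apply_of_ne, hω.self_eq_zero, add_zero]
    · exact add_le_of_nonpos_right (apply_lt_zero hω hd (by omega) (by omega)).le
    · exact le_add_of_nonneg_right (hd (i + 1) (i + 2) (by omega) (by omega)).le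
    · exact add_lt_of_neg_right _ (apply_lt_zero hω hd (by omega) (by omega))
  · rw [show n - 3 + 1 = n - 2 by omega, show n - 3 + 2 = n - 1 by omega,
      Nat.mod_eq_of_lt (by omega), Nat.mod_eq_of_lt (by omega)]
    refine _root_.segment_inter_segment_eq_singleton (ω (d (n - 2))) ?_ ?_ (.inl ?_) <;>
      simp (disch := omega) only [map_apply_of_ne, apply_apex, hω.self_eq_zero, add_zero,
        le_refl]
    · exact add_le_of_nonpos_right (apply_lt_zero hω hd (by omega) (by omega)).le
    · exact add_lt_of_neg_right _ (apply_lt_zero hω hd (by omega) (by omega))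
  · rw [show n - 2 + 1 = n - 1 by omega, show n - 2 + 2 = n by omega, Nat.mod_self,
      Nat.mod_eq_of_lt (by omega)]
    refine _root_.segment_inter_segment_eq_singleton (ω.flip (d 0)) ?_ ?_ (.inl ?_) <;>
      simp (disch := omega) only [map_apply_of_ne (ω.flip (d 0)), apply_apex] <;>
      simp only [LinearMap.flip_apply, hω.self_eq_zero, add_zero, le_refl]
    · exact add_le_of_nonpos_right (apply_lt_zero hω hd (by omega) (by omega)).le
    · exact add_lt_of_neg_right _ (apply_lt_zero hω hd (by omega) (by omega))
  · rw [show n - 1 + 1 = n by omega, show n - 1 + 2 = n + 1 by omega, Nat.mod_self,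
      Nat.add_mod_left, Nat.mod_eq_of_lt (by omega)]
    refine _root_.segment_inter_segment_eq_singleton (ω (d 0)) ?_ ?_ (.inr ?_) <;>
      simp (disch := omega) only [map_apply_of_ne, apply_apex, hω.self_eq_zero, add_zero,
        le_refl]
    · exact le_add_of_nonneg_right (hd 0 1 (by omega) (by omega)).le
    · exact lt_add_of_pos_right _ (hd 0 1 (by omega) (by omega))

end fanPolygon

theorem isSimplePolygon_fanPolygon
    {ω : EuclideanSpace ℝ (Fin 2) →ₗ[ℝ] EuclideanSpace ℝ (Fin 2) →ₗ[ℝ] ℝ} (hω : ω.IsAlt)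
    {n : ℕ} (hn : 3 ≤ n) (c : EuclideanSpace ℝ (Fin 2))
    {d : ℕ → EuclideanSpace ℝ (Fin 2)} (hd : ∀ i j, i < j → j < n - 1 → 0 < ω (d i) (d j)) :
    IsSimplePolygon n (fanPolygon n c d) := by
  refine ⟨fun i hi j hj h => fanPolygon.injOn_Iio hω hd hn hi hj h, ?_,
    fun i hi => fanPolygon.segment_inter_segment_eq_singleton hω hd hn hi⟩
  intro i hi j hj hij hij' hji
  rcases hij.lt_or_gt with h | h
  · rw [Nat.mod_eq_of_lt (by omega : i + 1 < n)] at hij' ⊢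
    exact fanPolygon.segment_inter_segment_eq_empty hω hd (by omega) hj hji
  · rw [Nat.mod_eq_of_lt (by omega : j + 1 < n)] at hji ⊢
    rw [Set.inter_comm]
    exact fanPolygon.segment_inter_segment_eq_empty hω hd (by omega) hi hij'

theorem LinearMap.IsAlt.apply_smul_add_smul {E : Type*} [AddCommGroup E] [Module ℝ E]
    {ω : E →ₗ[ℝ] E →ₗ[ℝ] ℝ} (hω : ω.IsAlt) (u w : E) (r r' a b : ℝ) :
    ω (r • (u + a • w)) (r' • (u + b • w)) = r * r' * (b - a) * ω u w := by
  simp only [map_smul, map_add, LinearMap.smul_apply, LinearMap.add_apply, hω.self_eq_zero,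
    ← hω.neg u w, smul_eq_mul]
  ring

theorem exists_isAlt_apply_pos {E : Type*} [NormedAddCommGroup E] [InnerProductSpace ℝ E]
    [Fact (Module.finrank ℝ E = 2)] {u : E} (hu : u ≠ 0) :
    ∃ ω : E →ₗ[ℝ] E →ₗ[ℝ] ℝ, ω.IsAlt ∧ ∃ w, 0 < ω u w := by
  have : FiniteDimensional ℝ E := .of_fact_finrank_eq_two
  let o : Orientation ℝ E (Fin 2) := (Module.finBasisOfFinrankEq ℝ E Fact.out).orientation
  refine ⟨o.areaForm, o.areaForm_apply_self, o.rightAngleRotation u, ?_⟩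
  rw [o.areaForm_rightAngleRotation_right, real_inner_self_eq_norm_sq]
  exact pow_pos (norm_pos_iff.mpr hu) 2

def zigzagFan {E : Type*} [AddCommGroup E] [Module ℝ E] (p q w : E) (t : ℝ) (k : ℕ) : ℕ → E :=
  fanPolygon (2 * k) q fun m => (if m % 2 = 0 then 1 else t) • (p - q + (m * t) • w)

theorem isSimplePolygon_zigzagFan
    {ω : EuclideanSpace ℝ (Fin 2) →ₗ[ℝ] EuclideanSpace ℝ (Fin 2) →ₗ[ℝ] ℝ} (hω : ω.IsAlt)
    {p q w : EuclideanSpace ℝ (Fin 2)} (hw : 0 < ω (p - q) w) {t : ℝ} (ht : 0 < t) {k : ℕ}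
    (hk : 2 ≤ k) : IsSimplePolygon (2 * k) (zigzagFan p q w t k) := by
  refine isSimplePolygon_fanPolygon hω (by omega) q fun i j hij _ => ?_
  have hr (m : ℕ) : (0 : ℝ) < if m % 2 = 0 then 1 else t := by split_ifs <;> positivity
  have hij' : (i : ℝ) * t < j * t := by gcongr
  rw [hω.apply_smul_add_smul]
  exact mul_pos (mul_pos (mul_pos (hr i) (hr j)) (sub_pos.mpr hij')) hw

theorem zigzagFan_close {E : Type*} [NormedAddCommGroup E] [NormedSpace ℝ E] {p q w : E}
    {t ε : ℝ} {k i : ℕ} (ht₀ : 0 < t) (ht₁ : t ≤ 1) (htε : t * (‖p - q‖ + 2 * k * ‖w‖) < ε)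
    (hi : i < 2 * k) :
    (i % 2 = 0 → ‖zigzagFan p q w t k i - p‖ < ε) ∧
      (i % 2 = 1 → ‖zigzagFan p q w t k i - q‖ < ε) := by
  have hi' : (i : ℝ) ≤ 2 * k := by exact_mod_cast hi.le
  refine ⟨fun he => ?_, fun ho => ?_⟩
  · rw [zigzagFan, fanPolygon.apply_of_ne (by omega), if_pos he, one_smul,
      show q + (p - q + (i * t : ℝ) • w) - p = (i * t : ℝ) • w by abel, norm_smul,
      Real.norm_of_nonneg (by positivity)]
    calc i * t * ‖w‖ = t * (i * ‖w‖) := by ring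
      _ ≤ t * (‖p - q‖ + 2 * k * ‖w‖) := by
        gcongr
        linarith [norm_nonneg (p - q), mul_le_mul_of_nonneg_right hi' (norm_nonneg w)]
      _ < ε := htε
  rcases eq_or_ne i (2 * k - 1) with rfl | hlast
  · rw [zigzagFan, fanPolygon.apply_apex, sub_self, norm_zero]
    exact lt_of_le_of_lt (by positivity) htε
  rw [zigzagFan, fanPolygon.apply_of_ne hlast, if_neg (by omega), add_sub_cancel_left, norm_smul,
    Real.norm_of_nonneg ht₀.le]
  calc t * ‖p - q + (i * t : ℝ) • w‖ ≤ t * (‖p - q‖ + i * t * ‖w‖) := by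
        gcongr
        refine (norm_add_le _ _).trans_eq ?_
        rw [norm_smul, Real.norm_of_nonneg (by positivity)]
    _ ≤ t * (‖p - q‖ + 2 * k * ‖w‖) := by
        gcongr t * (_ + ?_ * _)
        exact (mul_le_of_le_one_right (Nat.cast_nonneg i) ht₁).trans hi'
    _ < ε := htε

/-- The polygon with `2k` vertices alternating between two distinct points
`p` and `q` is weakly simple: for every `ε > 0` there is a simple polygon whose
even vertices are within `ε` of `p` and odd vertices within `ε` of `q`. -/
theorem alternating_polygon_weakly_simple
    (p q : EuclideanSpace ℝ (Fin 2)) (hpq : p ≠ q) (k : ℕ) (hk : 2 ≤ k) :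
    ∀ ε > (0:ℝ), ∃ v : ℕ → EuclideanSpace ℝ (Fin 2),
      IsSimplePolygon (2 * k) v ∧
      ∀ i < 2 * k, (i % 2 = 0 → ‖v i - p‖ < ε) ∧ (i % 2 = 1 → ‖v i - q‖ < ε) := by
  intro ε hε
  have : Fact (Module.finrank ℝ (EuclideanSpace ℝ (Fin 2)) = 2) := ⟨finrank_euclideanSpace_fin⟩
  obtain ⟨ω, hω, w, hw⟩ := exists_isAlt_apply_pos (sub_ne_zero.mpr hpq)
  obtain ⟨t₀, ht₀, ht₀ε⟩ := exists_pos_mul_lt hε (‖p - q‖ + 2 * k * ‖w‖)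
  set t := min t₀ 1
  have ht : 0 < t := lt_min ht₀ one_pos
  have htε : t * (‖p - q‖ + 2 * k * ‖w‖) < ε := by
    rw [mul_comm]
    exact (mul_le_mul_of_nonneg_left (min_le_left t₀ 1) (by positivity)).trans_lt ht₀ε
  exact ⟨zigzagFan p q w t k, isSimplePolygon_zigzagFan hω hw ht hk,
    fun i hi => zigzagFan_close ht (min_le_right t₀ 1) htε hi⟩
end

section
/- Let s₁, s₂ be points on the open upper unit semicircle and t₁, t₂ points on the open lower unit semicircle, all four distinct. Write x(p) for the first coordinate. Then the closed segments [s₁, t₁] and [s₂, t₂] intersect in a point that is not a common endpoint if and only if (x(s₁) < x(s₂) and x(t₁) > x(t₂)) or (x(s₂) < x(s₁) and x(t₂) > x(t₁)), assuming x(s₁) ≠ x(s₂) and x(t₁) ≠ x(t₂). -/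
/-!
Parametrize the circle rationally by `u ↦ ((1 - u²) / (1 + u²), 2u / (1 + u²))`, so the upper and
lower open semicircles are the parameters `u > 0` and `u < 0`. The orientation determinant of three
such points factors as `4 (u - v)(v - w)(w - u)` over a positive denominator, and the first
coordinate is strictly decreasing in `u²`. Hence the sign of the orientation of a chord `[s, t]`
against another upper (lower) endpoint is the order of the two upper (lower) `x`-coordinates.
Two segments cross when each one's line separates the other's endpoints, and are disjoint when one
lies strictly on one side of the other's line; by the sign computation the first happens exactly
for inverted orders and the second otherwise.
-/

/-- Twice the signed area of the triangle `a b c`. -/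
def orient (a b c : ℝ × ℝ) : ℝ := (b.1 - a.1) * (c.2 - a.2) - (b.2 - a.2) * (c.1 - a.1)

lemma orient_smul_add_smul (a b p q : ℝ × ℝ) {α β : ℝ} (h : α + β = 1) :
    orient a b (α • p + β • q) = α * orient a b p + β * orient a b q := by
  obtain rfl : α = 1 - β := by linarith
  simp only [orient, Prod.fst_add, Prod.snd_add, Prod.smul_fst, Prod.smul_snd, smul_eq_mul]
  ring

lemma orient_eq_zero_of_mem_segment {a b x : ℝ × ℝ} (hx : x ∈ segment ℝ a b) :
    orient a b x = 0 := by
  obtain ⟨α, β, -, -, hαβ, rfl⟩ := hx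
  rw [orient_smul_add_smul a b a b hαβ]
  simp only [orient]
  ring

lemma disjoint_segment_of_orient_mul_pos {s₁ t₁ s₂ t₂ : ℝ × ℝ}
    (h : 0 < orient s₁ t₁ s₂ * orient s₁ t₁ t₂) :
    Disjoint (segment ℝ s₁ t₁) (segment ℝ s₂ t₂) := by
  refine Set.disjoint_left.2 fun x hx₁ hx₂ => ?_
  obtain ⟨α, β, hα, hβ, hαβ, rfl⟩ := hx₂
  have hzero := orient_eq_zero_of_mem_segment hx₁
  rw [orient_smul_add_smul _ _ _ _ hαβ] at hzero
  have hs : orient s₁ t₁ s₂ ≠ 0 := left_ne_zero_of_mul h.ne'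
  have hpos : 0 < orient s₁ t₁ s₂ * (α * orient s₁ t₁ s₂ + β * orient s₁ t₁ t₂) := by
    rcases hα.eq_or_lt with rfl | hα
    · rw [zero_add] at hαβ
      simpa [hαβ] using h
    · nlinarith [mul_pos hα (mul_self_pos.2 hs), mul_nonneg hβ h.le]
  rw [hzero, mul_zero] at hpos
  exact hpos.false

lemma inv_smul_add_smul_mem_openSegment {𝕜 E : Type*} [Field 𝕜] [LinearOrder 𝕜]
    [IsStrictOrderedRing 𝕜] [AddCommGroup E] [Module 𝕜 E] (a b : E) {p q : 𝕜} (h : 0 < p * q) :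
    (p + q)⁻¹ • (p • a + q • b) ∈ openSegment 𝕜 a b := by
  have hpq : 0 < (p + q)⁻¹ * p ∧ 0 < (p + q)⁻¹ * q := by
    rcases mul_pos_iff.1 h with ⟨hp, hq⟩ | ⟨hp, hq⟩
    · exact ⟨by positivity, by positivity⟩
    · have : (p + q)⁻¹ < 0 := inv_lt_zero.2 (by linarith)
      exact ⟨mul_pos_of_neg_of_neg this hp, mul_pos_of_neg_of_neg this hq⟩
  refine ⟨_, _, hpq.1, hpq.2, ?_, by rw [smul_add, smul_smul, smul_smul]⟩
  rw [← mul_add, inv_mul_cancel₀]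
  intro h0
  simp [h0] at hpq

lemma exists_mem_openSegment_of_orient_mul_neg {s₁ t₁ s₂ t₂ : ℝ × ℝ}
    (h₁ : orient s₁ t₁ s₂ * orient s₁ t₁ t₂ < 0) (h₂ : orient s₂ t₂ s₁ * orient s₂ t₂ t₁ < 0) :
    ∃ x, x ∈ openSegment ℝ s₁ t₁ ∧ x ∈ openSegment ℝ s₂ t₂ := by
  -- Cramer's rule: both sides are `orient s₂ t₂ s₁ - orient s₂ t₂ t₁` times the intersection point.
  have hcramer : (-orient s₂ t₂ t₁) • s₁ + orient s₂ t₂ s₁ • t₁ =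
      orient s₁ t₁ t₂ • s₂ + (-orient s₁ t₁ s₂) • t₂ := by
    ext <;> simp only [orient, Prod.fst_add, Prod.snd_add, Prod.smul_fst, Prod.smul_snd,
      smul_eq_mul] <;> ring
  have hsum : -orient s₂ t₂ t₁ + orient s₂ t₂ s₁ = orient s₁ t₁ t₂ + -orient s₁ t₁ s₂ := by
    simp only [orient]; ring
  refine ⟨_, inv_smul_add_smul_mem_openSegment s₁ t₁
    (p := -orient s₂ t₂ t₁) (q := orient s₂ t₂ s₁) (by linarith), ?_⟩
  rw [hcramer, hsum]
  exact inv_smul_add_smul_mem_openSegment s₂ t₂ (by linarith)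

/-- Rational parametrization of the unit circle minus `(-1, 0)`; `u` is `tan (θ / 2)`. -/
noncomputable def circlePoint (u : ℝ) : ℝ × ℝ := ((1 - u ^ 2) / (1 + u ^ 2), 2 * u / (1 + u ^ 2))

lemma orient_circlePoint (u v w : ℝ) :
    orient (circlePoint u) (circlePoint v) (circlePoint w) =
      4 * (u - v) * (v - w) * (w - u) / ((1 + u ^ 2) * (1 + v ^ 2) * (1 + w ^ 2)) := by
  simp only [orient, circlePoint]
  field_simp
  ring

lemma circlePoint_fst_sub_fst (u v : ℝ) :
    (circlePoint v).1 - (circlePoint u).1 = 2 * (u ^ 2 - v ^ 2) / ((1 + u ^ 2) * (1 + v ^ 2)) := by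
  simp only [circlePoint]
  field_simp
  ring

lemma one_add_fst_pos_of_mem_circle {p : ℝ × ℝ} (h : p.1 ^ 2 + p.2 ^ 2 = 1) (hp : p.2 ≠ 0) :
    0 < 1 + p.1 := by
  have : 0 < p.2 ^ 2 := by positivity
  nlinarith

lemma circlePoint_div_one_add_fst {p : ℝ × ℝ} (h : p.1 ^ 2 + p.2 ^ 2 = 1) (hp : p.2 ≠ 0) :
    circlePoint (p.2 / (1 + p.1)) = p := by
  have hx := (one_add_fst_pos_of_mem_circle h hp).ne'
  ext <;> simp only [circlePoint] <;> field_simp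
  · linear_combination -(1 + p.1) * h
  · linear_combination -h

lemma exists_pos_circlePoint_eq {p : ℝ × ℝ} (h : p.1 ^ 2 + p.2 ^ 2 = 1) (hp : 0 < p.2) :
    ∃ u, 0 < u ∧ circlePoint u = p :=
  ⟨_, div_pos hp (one_add_fst_pos_of_mem_circle h hp.ne'), circlePoint_div_one_add_fst h hp.ne'⟩

lemma exists_neg_circlePoint_eq {p : ℝ × ℝ} (h : p.1 ^ 2 + p.2 ^ 2 = 1) (hp : p.2 < 0) :
    ∃ u, u < 0 ∧ circlePoint u = p :=
  ⟨_, div_neg_of_neg_of_pos hp (one_add_fst_pos_of_mem_circle h hp.ne),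
    circlePoint_div_one_add_fst h hp.ne⟩

section Sign

variable {u v w : ℝ}

lemma sign_orient_circlePoint_of_pos_neg_pos (hu : 0 < u) (hv : v < 0) (hw : 0 < w) :
    SignType.sign (orient (circlePoint u) (circlePoint v) (circlePoint w)) =
      SignType.sign ((circlePoint w).1 - (circlePoint u).1) := by
  have hK : 0 < 4 * (u - v) * (w - v) / ((1 + u ^ 2) * (1 + v ^ 2) * (1 + w ^ 2)) :=
    div_pos (mul_pos (mul_pos four_pos (by linarith)) (by linarith)) (by positivity)
  have hL : 0 < 2 * (u + w) / ((1 + u ^ 2) * (1 + w ^ 2)) :=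
    div_pos (mul_pos two_pos (by linarith)) (by positivity)
  rw [orient_circlePoint, circlePoint_fst_sub_fst,
    show 4 * (u - v) * (v - w) * (w - u) / ((1 + u ^ 2) * (1 + v ^ 2) * (1 + w ^ 2)) =
      (u - w) * (4 * (u - v) * (w - v) / ((1 + u ^ 2) * (1 + v ^ 2) * (1 + w ^ 2))) by ring,
    show 2 * (u ^ 2 - w ^ 2) / ((1 + u ^ 2) * (1 + w ^ 2)) =
      (u - w) * (2 * (u + w) / ((1 + u ^ 2) * (1 + w ^ 2))) by ring,
    sign_mul, sign_mul, sign_pos hK, sign_pos hL]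

lemma sign_orient_circlePoint_of_pos_neg_neg (hu : 0 < u) (hv : v < 0) (hw : w < 0) :
    SignType.sign (orient (circlePoint u) (circlePoint v) (circlePoint w)) =
      SignType.sign ((circlePoint w).1 - (circlePoint v).1) := by
  have hK : 0 < 4 * (u - v) * (u - w) / ((1 + u ^ 2) * (1 + v ^ 2) * (1 + w ^ 2)) :=
    div_pos (mul_pos (mul_pos four_pos (by linarith)) (by linarith)) (by positivity)
  have hL : 0 < -2 * (v + w) / ((1 + v ^ 2) * (1 + w ^ 2)) :=
    div_pos (by nlinarith) (by positivity)
  rw [orient_circlePoint, circlePoint_fst_sub_fst,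
    show 4 * (u - v) * (v - w) * (w - u) / ((1 + u ^ 2) * (1 + v ^ 2) * (1 + w ^ 2)) =
      (w - v) * (4 * (u - v) * (u - w) / ((1 + u ^ 2) * (1 + v ^ 2) * (1 + w ^ 2))) by ring,
    show 2 * (v ^ 2 - w ^ 2) / ((1 + v ^ 2) * (1 + w ^ 2)) =
      (w - v) * (-2 * (v + w) / ((1 + v ^ 2) * (1 + w ^ 2))) by ring,
    sign_mul, sign_mul, sign_pos hK, sign_pos hL]

lemma sign_orient_mul_orient_circlePoint {z : ℝ} (hu : 0 < u) (hv : v < 0) (hw : 0 < w)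
    (hz : z < 0) :
    SignType.sign (orient (circlePoint u) (circlePoint v) (circlePoint w) *
        orient (circlePoint u) (circlePoint v) (circlePoint z)) =
      SignType.sign (((circlePoint w).1 - (circlePoint u).1) *
        ((circlePoint z).1 - (circlePoint v).1)) := by
  rw [sign_mul, sign_mul, sign_orient_circlePoint_of_pos_neg_pos hu hv hw,
    sign_orient_circlePoint_of_pos_neg_neg hu hv hz]

end Sign

/-- Chords of the unit circle with one endpoint on the open upper semicircle and
one on the open lower semicircle cross (in a point that is not a common
endpoint) iff their endpoint orders by `x`-coordinate are inverted. -/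
theorem chords_cross_iff_inverted
    (s₁ s₂ t₁ t₂ : ℝ × ℝ)
    (hs₁ : s₁.1 ^ 2 + s₁.2 ^ 2 = 1) (hs₁' : 0 < s₁.2)
    (hs₂ : s₂.1 ^ 2 + s₂.2 ^ 2 = 1) (hs₂' : 0 < s₂.2)
    (ht₁ : t₁.1 ^ 2 + t₁.2 ^ 2 = 1) (ht₁' : t₁.2 < 0)
    (ht₂ : t₂.1 ^ 2 + t₂.2 ^ 2 = 1) (ht₂' : t₂.2 < 0)
    (hsx : s₁.1 ≠ s₂.1) (htx : t₁.1 ≠ t₂.1) :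
    (∃ x, x ∈ segment ℝ s₁ t₁ ∧ x ∈ segment ℝ s₂ t₂ ∧
        ¬ ((x = s₁ ∨ x = t₁) ∧ (x = s₂ ∨ x = t₂))) ↔
      ((s₁.1 < s₂.1 ∧ t₂.1 < t₁.1) ∨ (s₂.1 < s₁.1 ∧ t₁.1 < t₂.1)) := by
  have hst₂ : s₂ ≠ t₂ := fun h => by rw [h] at hs₂'; linarith
  have hinv : ((s₁.1 < s₂.1 ∧ t₂.1 < t₁.1) ∨ (s₂.1 < s₁.1 ∧ t₁.1 < t₂.1)) ↔
      (s₂.1 - s₁.1) * (t₂.1 - t₁.1) < 0 := by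
    rw [mul_neg_iff, sub_pos, sub_pos, sub_neg, sub_neg]
  have hd : (s₂.1 - s₁.1) * (t₂.1 - t₁.1) ≠ 0 :=
    mul_ne_zero (sub_ne_zero.2 hsx.symm) (sub_ne_zero.2 htx.symm)
  obtain ⟨σ₁, hσ₁, rfl⟩ := exists_pos_circlePoint_eq hs₁ hs₁'
  obtain ⟨σ₂, hσ₂, rfl⟩ := exists_pos_circlePoint_eq hs₂ hs₂'
  obtain ⟨τ₁, hτ₁, rfl⟩ := exists_neg_circlePoint_eq ht₁ ht₁'
  obtain ⟨τ₂, hτ₂, rfl⟩ := exists_neg_circlePoint_eq ht₂ ht₂'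
  have hsign₁ := sign_orient_mul_orient_circlePoint hσ₁ hτ₁ hσ₂ hτ₂
  have hsign₂ := sign_orient_mul_orient_circlePoint hσ₂ hτ₂ hσ₁ hτ₁
  rw [← neg_sub (circlePoint σ₂).1, ← neg_sub (circlePoint τ₂).1, neg_mul_neg] at hsign₂
  rw [hinv]
  rcases hd.lt_or_gt with hneg | hpos
  · rw [sign_neg hneg, sign_eq_neg_one_iff] at hsign₁ hsign₂
    obtain ⟨x, hx₁, hx₂⟩ := exists_mem_openSegment_of_orient_mul_neg hsign₁ hsign₂
    refine iff_of_true ⟨x, openSegment_subset_segment _ _ _ hx₁,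
      openSegment_subset_segment _ _ _ hx₂, ?_⟩ hneg
    rintro ⟨-, rfl | rfl⟩
    · exact hst₂ (left_mem_openSegment_iff.1 hx₂)
    · exact hst₂ (right_mem_openSegment_iff.1 hx₂)
  · rw [sign_pos hpos, sign_eq_one_iff] at hsign₁
    refine iff_of_false ?_ hpos.not_gt
    rintro ⟨x, hx₁, hx₂, -⟩
    exact Set.disjoint_left.1 (disjoint_segment_of_orient_mul_pos hsign₁) hx₁ hx₂
end
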